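/- Let w′, w ∈ W^J with w′ < w in Bruhat order, and fix u ∈ W_J. Then w′u is covered by at most one element of the coset wW_J in Bruhat order; that is, there is at most one v ∈ W_J with w′u ⋖ wv. -/

import Mathlib

namespace TNNFlag

open Classical

variable {B : Type*} {W : Type*} [Group W] {M : CoxeterMatrix B}

/-- Bruhat order on a Coxeter group, via the subword property: `u ≤ w` iff some reduced word
for `w` contains a sublist that is a reduced word for `u`. -/
def bruhatLE (cs : CoxeterSystem M W) (u w : W) : Prop :=
  ∃ ω : List B, cs.IsReduced ω ∧ cs.wordProd ω = w ∧
    ∃ ω' : List B, ω'.Sublist ω ∧ cs.IsReduced ω' ∧ cs.wordProd ω' = u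

/-- Strict Bruhat order. -/
def bruhatLT (cs : CoxeterSystem M W) (u w : W) : Prop :=
  bruhatLE cs u w ∧ u ≠ w

/-- Bruhat covering: `u ⋖ w`, i.e. `u < w` and `ℓ(w) = ℓ(u) + 1`. -/
def bruhatCov (cs : CoxeterSystem M W) (u w : W) : Prop :=
  bruhatLT cs u w ∧ cs.length w = cs.length u + 1

/-- The standard parabolic subgroup `W_J` generated by the simple reflections `s_j`, `j ∈ J`. -/
def parabolic (cs : CoxeterSystem M W) (J : Set B) : Subgroup W :=
  Subgroup.closure {w | ∃ j ∈ J, w = cs.simple j}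

/-- `W^J`: the set of minimal-length representatives of the cosets `W/W_J`. -/
def minReps (cs : CoxeterSystem M W) (J : Set B) : Set W :=
  {w | ∀ v ∈ parabolic cs J, cs.length w ≤ cs.length (w * v)}

/-- `u₀` is the longest element of the (finite) parabolic subgroup `W_J`. -/
def IsLongest (cs : CoxeterSystem M W) (J : Set B) (u₀ : W) : Prop :=
  u₀ ∈ parabolic cs J ∧ ∀ v ∈ parabolic cs J, cs.length v ≤ cs.length u₀

/-- `W^J_max = {w·u₀ : w ∈ W^J}`: maximal-length coset representatives of `W/W_J`. -/
def maxReps (cs : CoxeterSystem M W) (J : Set B) (u₀ : W) : Set W :=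
  {x | ∃ w ∈ minReps cs J, x = w * u₀}

/-- The index set `𝓘^J` of triples `(x, u, w) ∈ W^J_max × W_J × W^J` with `x ≤ wu`. -/
def IndexSet (cs : CoxeterSystem M W) (J : Set B) (u₀ : W) : Set (W × W × W) :=
  {t | t.1 ∈ maxReps cs J u₀ ∧ t.2.1 ∈ parabolic cs J ∧ t.2.2 ∈ minReps cs J ∧
    bruhatLE cs t.1 (t.2.2 * t.2.1)}

/-- The order relation between cells: `Q_{a,b,c} ≤ Q_{x,u,w}` iff the triples are equal or
there exist `b₁, b₂ ∈ W_J` with `b = b₁b₂`, `ℓ(b) = ℓ(b₁) + ℓ(b₂)` and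
`xu⁻¹ ≤ ab₂⁻¹ ≤ cb₁ ≤ w` in Bruhat order. Here `t = (a,b,c)` and `t' = (x,u,w)`. -/
def cellLE (cs : CoxeterSystem M W) (J : Set B) (t t' : W × W × W) : Prop :=
  t = t' ∨
    ∃ b₁ b₂ : W, b₁ ∈ parabolic cs J ∧ b₂ ∈ parabolic cs J ∧ t.2.1 = b₁ * b₂ ∧
      cs.length t.2.1 = cs.length b₁ + cs.length b₂ ∧
      bruhatLE cs (t'.1 * t'.2.1⁻¹) (t.1 * b₂⁻¹) ∧
      bruhatLE cs (t.1 * b₂⁻¹) (t.2.2 * b₁) ∧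
      bruhatLE cs (t.2.2 * b₁) t'.2.2

/-- The order of `𝓠^J`, on `Option (W × W × W)`, where `none` is the least element `0̂` and
`some (x,u,w)` is the cell `Q_{x,u,w}`. -/
def QLE (cs : CoxeterSystem M W) (J : Set B) :
    Option (W × W × W) → Option (W × W × W) → Prop
  | none, _ => True
  | some _, none => False
  | some t, some t' => cellLE cs J t t'

/-- Membership in `𝓠^J`: `0̂` together with the cells indexed by `𝓘^J`. -/
def Qmem (cs : CoxeterSystem M W) (J : Set B) (u₀ : W) : Option (W × W × W) → Prop
  | none => True
  | some t => t ∈ IndexSet cs J u₀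

/-- Strict order of `𝓠^J`. -/
def QLT (cs : CoxeterSystem M W) (J : Set B) (p q : Option (W × W × W)) : Prop :=
  QLE cs J p q ∧ p ≠ q

/-- Covering relation of `𝓠^J`. -/
def QCov (cs : CoxeterSystem M W) (J : Set B) (u₀ : W) (p q : Option (W × W × W)) : Prop :=
  Qmem cs J u₀ p ∧ Qmem cs J u₀ q ∧ QLT cs J p q ∧
    ∀ z, Qmem cs J u₀ z → QLT cs J p z → QLT cs J z q → False

/-- The rank function of `𝓠^J`: `ρ(0̂) = 0` and `ρ(Q_{x,u,w}) = ℓ(wu) - ℓ(x) + 1`. -/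
noncomputable def Qrank (cs : CoxeterSystem M W) : Option (W × W × W) → ℕ
  | none => 0
  | some t => cs.length (t.2.2 * t.2.1) - cs.length t.1 + 1

end TNNFlag
namespace TNNFlag

variable {B : Type*} {W : Type*} [Group W] {M : CoxeterMatrix B}


open Classical List CoxeterSystem

noncomputable def sigmaFun (cs : CoxeterSystem M W) (i : B) : W × ℤˣ → W × ℤˣ :=
  fun p => (cs.simple i * p.1 * cs.simple i, if p.1 = cs.simple i then -p.2 else p.2)

lemma conj_simple_eq_simple_iff (cs : CoxeterSystem M W) (i : B) (t : W) :
    cs.simple i * t * cs.simple i = cs.simple i ↔ t = cs.simple i := by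
  constructor
  · intro h
    have h2 : cs.simple i * (cs.simple i * t * cs.simple i) * cs.simple i
        = cs.simple i * cs.simple i * cs.simple i := by rw [h]
    simpa [mul_assoc] using h2
  · rintro rfl; simp

lemma sigmaFun_involutive (cs : CoxeterSystem M W) (i : B) :
    Function.Involutive (sigmaFun cs i) := by
  rintro ⟨t, ε⟩
  unfold sigmaFun
  simp only [conj_simple_eq_simple_iff]
  by_cases h : t = cs.simple i <;> simp [h, mul_assoc]

noncomputable def sigmaPerm (cs : CoxeterSystem M W) (i : B) : Equiv.Perm (W × ℤˣ) :=
  (sigmaFun_involutive cs i).toPerm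

lemma sigmaPerm_apply (cs : CoxeterSystem M W) (i : B) (t : W) (ε : ℤˣ) :
    sigmaPerm cs i (t, ε) =
      (cs.simple i * t * cs.simple i, if t = cs.simple i then -ε else ε) := rfl

private lemma conj_pow_aux {G : Type*} [Group G] (g x : G) (hg : g * g = 1) (n : ℕ) :
    g * x ^ n * g = (g * x * g) ^ n := by
  induction n with
  | zero => simpa using hg
  | succ n ih =>
    rw [pow_succ, pow_succ, ← ih]
    have h1 : g * x ^ n * g * (g * x * g) = g * x ^ n * (g * g) * x * g := by group
    rw [h1, hg]; group

private lemma prod_range_rot1 {α : Type*} [CommGroup α] (h : ℕ → α) (m : ℕ)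
    (hper : h m = h 0) :
    ∏ l ∈ Finset.range m, h (l + 1) = ∏ l ∈ Finset.range m, h l := by
  have e1 := Finset.prod_range_succ' h m
  have e2 := Finset.prod_range_succ h m
  rw [e2, hper] at e1
  exact mul_right_cancel e1.symm

private lemma prod_range_shift {α : Type*} [CommGroup α] (h : ℕ → α) (m : ℕ)
    (hper : ∀ l, h (l + m) = h l) (d : ℕ) :
    ∏ l ∈ Finset.range m, h (l + d) = ∏ l ∈ Finset.range m, h l := by
  induction d with
  | zero => simp
  | succ d ih =>
    have step : ∏ l ∈ Finset.range m, (fun x => h (x + d)) (l + 1)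
        = ∏ l ∈ Finset.range m, h (l + d) := by
      apply prod_range_rot1 (fun x => h (x + d)) m
      show h (m + d) = h (0 + d)
      have h2 : m + d = 0 + d + m := by omega
      rw [h2, hper (0 + d)]
    calc ∏ l ∈ Finset.range m, h (l + (d + 1))
        = ∏ l ∈ Finset.range m, (fun x => h (x + d)) (l + 1) := by
          apply Finset.prod_congr rfl; intro x _; show h (x + (d+1)) = h (x + 1 + d); congr 1
          omega
      _ = ∏ l ∈ Finset.range m, h (l + d) := step
      _ = ∏ l ∈ Finset.range m, h l := ih

/-- The key dihedral sign computation. -/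
private lemma braid_sign {G : Type*} [Group G] (p q : G) (hpp : p * p = 1) (hqq : q * q = 1)
    (m : ℕ) (hcm : (p * q) ^ m = 1) (t : G) :
    ∏ l ∈ Finset.range m,
      ((if (p*q)^l * t * ((p*q)^l)⁻¹ = q*p*q then (-1 : ℤˣ) else 1) *
       (if (p*q)^l * t * ((p*q)^l)⁻¹ = q then (-1 : ℤˣ) else 1)) = 1 := by
  have hpi : p⁻¹ = p := inv_eq_of_mul_eq_one_right hpp
  have hqi : q⁻¹ = q := inv_eq_of_mul_eq_one_right hqq
  have hpl : ∀ x : G, p * (p * x) = x := by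
    intro x; rw [← mul_assoc, hpp, one_mul]
  have hql : ∀ x : G, q * (q * x) = x := by
    intro x; rw [← mul_assoc, hqq, one_mul]
  set c := p * q with hc
  set x : ℕ → G := fun l => c^l * t * (c^l)⁻¹ with hx
  have hxper : ∀ l, x (l + m) = x l := by
    intro l; simp only [hx, pow_add, hcm, mul_one]
  have hxsucc : ∀ l, x (l + 1) = c * x l * c⁻¹ := by
    intro l; simp only [hx, pow_succ, mul_inv_rev]
    calc c ^ l * c * t * (c⁻¹ * (c ^ l)⁻¹) = c ^ l * (c * t * c⁻¹) * (c ^ l)⁻¹ := by group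
    _ = c * (c^l * t * (c^l)⁻¹) * c⁻¹ := by group
  have hpcq : c * q = p := by
    simp only [hc, mul_assoc, hqq, mul_one]
  have hqcq : q * c * q = c⁻¹ := by
    simp only [hc, mul_inv_rev, hpi, hqi, mul_assoc, hqq, mul_one]
  have hpcp : p * c * p = c⁻¹ := by
    simp only [hc, mul_inv_rev, hpi, hqi, mul_assoc, hpl]
  have hcqpqc : c⁻¹ * p * c = q * p * q := by
    simp only [hc, mul_inv_rev, hpi, hqi, mul_assoc, hpl]
  -- x l = q*p*q ↔ x (l+1) = p
  have hiff : ∀ l, (x l = q * p * q) ↔ (x (l + 1) = p) := by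
    intro l
    rw [hxsucc l]
    constructor
    · intro h; rw [h, ← hcqpqc]; group
    · intro h
      have h2 : c⁻¹ * (c * x l * c⁻¹) * c = c⁻¹ * p * c := by rw [h]
      calc x l = c⁻¹ * (c * x l * c⁻¹) * c := by group
      _ = c⁻¹ * p * c := h2
      _ = q * p * q := hcqpqc
  show ∏ l ∈ Finset.range m,
      ((if x l = q*p*q then (-1 : ℤˣ) else 1) * (if x l = q then (-1 : ℤˣ) else 1)) = 1
  have hrw : ∏ l ∈ Finset.range m,
      ((if x l = q*p*q then (-1 : ℤˣ) else 1) * (if x l = q then (-1 : ℤˣ) else 1))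
      = (∏ l ∈ Finset.range m, (if x l = p then (-1 : ℤˣ) else 1))
        * (∏ l ∈ Finset.range m, (if x l = q then (-1 : ℤˣ) else 1)) := by
    rw [Finset.prod_mul_distrib]
    congr 1
    calc ∏ l ∈ Finset.range m, (if x l = q*p*q then (-1 : ℤˣ) else 1)
        = ∏ l ∈ Finset.range m, (fun j => if x j = p then (-1 : ℤˣ) else 1) (l + 1) := by
          apply Finset.prod_congr rfl; intro l _
          exact if_congr (hiff l) rfl rfl
      _ = ∏ l ∈ Finset.range m, (if x l = p then (-1 : ℤˣ) else 1) := by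
          exact prod_range_rot1 (fun j => if x j = p then (-1 : ℤˣ) else 1) m
            (by show (if x m = p then (-1 : ℤˣ) else 1) = (if x 0 = p then (-1 : ℤˣ) else 1)
                rw [show m = 0 + m by omega, hxper 0])
  rw [hrw]
  rcases Nat.even_or_odd m with ⟨k, hk⟩ | ⟨d, hd⟩
  · -- even case
    have hck : c ^ k * c ^ k = 1 := by rw [← pow_add, ← hk, hcm]
    have hcki : (c ^ k)⁻¹ = c ^ k := inv_eq_of_mul_eq_one_right hck
    have hcomm : ∀ g : G, g * g = 1 → g * c * g = c⁻¹ → c ^ k * g = g * c ^ k := by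
      intro g hgg hgcg
      have h1 : g * c ^ k * g = c ^ k := by
        rw [conj_pow_aux g c hgg k, hgcg, inv_pow, hcki]
      calc c ^ k * g = g * (g * c ^ k * g) := by rw [← mul_assoc, ← mul_assoc, hgg, one_mul]
      _ = g * c ^ k := by rw [h1]
    have hxk : ∀ l, x (k + l) = c ^ k * x l * (c ^ k)⁻¹ := by
      intro l; simp only [hx, pow_add, mul_inv_rev]; group
    have key : ∀ g : G, g * g = 1 → g * c * g = c⁻¹ →
        ∏ l ∈ Finset.range m, (if x l = g then (-1 : ℤˣ) else 1) = 1 := by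
      intro g hgg hgcg
      have hiffk : ∀ l, (x (k + l) = g) ↔ (x l = g) := by
        intro l
        rw [hxk l]
        constructor
        · intro h
          have h2 : (c ^ k)⁻¹ * (c ^ k * x l * (c ^ k)⁻¹) * c ^ k = (c ^ k)⁻¹ * g * c ^ k := by
            rw [h]
          have h3 : (c ^ k)⁻¹ * g * c ^ k = g := by
            rw [hcki]
            calc c ^ k * g * c ^ k = g * (c ^ k * c ^ k) := by rw [hcomm g hgg hgcg]; group
            _ = g := by rw [hck, mul_one]
          calc x l = (c ^ k)⁻¹ * (c ^ k * x l * (c ^ k)⁻¹) * c ^ k := by group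
          _ = g := by rw [h2, h3]
        · intro h
          rw [h]
          calc c ^ k * g * (c ^ k)⁻¹ = g * (c ^ k * (c ^ k)⁻¹) := by
                rw [hcomm g hgg hgcg]; group
          _ = g := by group
      rw [hk, Finset.prod_range_add]
      have : ∏ l ∈ Finset.range k, (if x (k + l) = g then (-1 : ℤˣ) else 1)
          = ∏ l ∈ Finset.range k, (if x l = g then (-1 : ℤˣ) else 1) := by
        apply Finset.prod_congr rfl; intro l _; exact if_congr (hiffk l) rfl rfl
      rw [this, Int.units_mul_self]
    rw [key p hpp hpcp, key q hqq hqcq, one_mul]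
  · -- odd case
    have hqcdq : q * c ^ d * q = (c ^ d)⁻¹ := by
      rw [conj_pow_aux q c hqq d, hqcq, inv_pow]
    have hqcdq' : q * (c ^ d)⁻¹ = c ^ d * q := by
      rw [← hqcdq]; simp only [mul_assoc, hql]
    have hdq : c ^ d * p * (c ^ d)⁻¹ = q := by
      calc c ^ d * p * (c ^ d)⁻¹ = c ^ d * c * (q * (c ^ d)⁻¹) := by rw [← hpcq]; group
      _ = c ^ d * c * (c ^ d * q) := by rw [hqcdq']
      _ = c ^ (d + 1 + d) * q := by rw [pow_add, pow_add, pow_one]; group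
      _ = q := by rw [show d + 1 + d = m by omega, hcm, one_mul]
    have hxd : ∀ l, x (l + d) = c ^ d * x l * (c ^ d)⁻¹ := by
      intro l; simp only [hx, pow_add, mul_inv_rev]; group
    have hiffd : ∀ l, (x l = p) ↔ (x (l + d) = q) := by
      intro l
      rw [hxd l]
      constructor
      · intro h; rw [h, hdq]
      · intro h
        have h2 : (c ^ d)⁻¹ * (c ^ d * x l * (c ^ d)⁻¹) * c ^ d
            = (c ^ d)⁻¹ * q * c ^ d := by rw [h]
        have h3 : (c ^ d)⁻¹ * q * c ^ d = p := by
          rw [← hdq]; group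
        calc x l = (c ^ d)⁻¹ * (c ^ d * x l * (c ^ d)⁻¹) * c ^ d := by group
        _ = p := by rw [h2, h3]
    have hstep : ∏ l ∈ Finset.range m, (if x l = p then (-1 : ℤˣ) else 1)
        = ∏ l ∈ Finset.range m, (if x l = q then (-1 : ℤˣ) else 1) := by
      calc ∏ l ∈ Finset.range m, (if x l = p then (-1 : ℤˣ) else 1)
          = ∏ l ∈ Finset.range m, (fun j => if x j = q then (-1 : ℤˣ) else 1) (l + d) := by
            apply Finset.prod_congr rfl; intro l _
            exact if_congr (hiffd l) rfl rfl
        _ = ∏ l ∈ Finset.range m, (if x l = q then (-1 : ℤˣ) else 1) := by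
            exact prod_range_shift (fun j => if x j = q then (-1 : ℤˣ) else 1) m
              (by intro l
                  show (if x (l + m) = q then (-1 : ℤˣ) else 1)
                      = (if x l = q then (-1 : ℤˣ) else 1)
                  rw [hxper l]) d
    rw [hstep, Int.units_mul_self]


lemma sigma_liftable (cs : CoxeterSystem M W) :
    M.IsLiftable (fun i => sigmaPerm cs i) := by
  intro i j
  simp only
  rcases Nat.eq_zero_or_pos (M i j) with h0 | hpos
  · rw [h0, pow_zero]
  obtain ⟨p, hp⟩ : ∃ x, x = cs.simple i := ⟨_, rfl⟩
  obtain ⟨q, hq⟩ : ∃ x, x = cs.simple j := ⟨_, rfl⟩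
  obtain ⟨c, hc⟩ : ∃ x, x = p * q := ⟨_, rfl⟩
  have hpp : p * p = 1 := by rw [hp]; exact cs.simple_mul_simple_self i
  have hqq : q * q = 1 := by rw [hq]; exact cs.simple_mul_simple_self j
  have hpi : p⁻¹ = p := inv_eq_of_mul_eq_one_right hpp
  have hqi : q⁻¹ = q := inv_eq_of_mul_eq_one_right hqq
  have hql : ∀ x : W, q * (q * x) = x := by
    intro x; rw [← mul_assoc, hqq, one_mul]
  have hcm : c ^ M i j = 1 := by
    rw [hc, hp, hq]; exact cs.simple_mul_simple_pow i j
  -- single step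
  have tau_apply : ∀ (u : W) (δ : ℤˣ),
      (sigmaPerm cs i * sigmaPerm cs j) (u, δ) =
        (c * u * c⁻¹,
          ((if u = q*p*q then (-1 : ℤˣ) else 1) * (if u = q then (-1 : ℤˣ) else 1)) * δ) := by
    intro u δ
    rw [Equiv.Perm.mul_apply, sigmaPerm_apply, sigmaPerm_apply]
    rw [← hp, ← hq]
    have hfst : p * (q * u * q) * p = c * u * c⁻¹ := by
      rw [hc, mul_inv_rev, hpi, hqi]; group
    rw [hfst]
    refine Prod.ext rfl ?_
    show (if q * u * q = p then -(if u = q then -δ else δ) else (if u = q then -δ else δ))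
        = ((if u = q*p*q then (-1 : ℤˣ) else 1) * (if u = q then (-1 : ℤˣ) else 1)) * δ
    have hmiddle : ∀ z : W, q * (q * z * q) * q = z := by
      intro z
      calc q * (q * z * q) * q = q * (q * (z * (q * q))) := by group
      _ = q * (q * z) := by rw [hqq, mul_one]
      _ = z := hql z
    have hcond : (q * u * q = p) ↔ (u = q * p * q) := by
      constructor
      · intro h
        calc u = q * (q * u * q) * q := (hmiddle u).symm
        _ = q * p * q := by rw [h]
      · rintro rfl
        exact hmiddle p
    by_cases h1 : u = q * p * q <;> by_cases h2 : u = q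
    · have h2' : q * p * q = q := by rw [← h1, h2]
      have h5 := hmiddle p
      rw [h2'] at h5
      have hcnd : q * u * q = p := by rw [h2, ← h5]
      rw [if_pos hcnd, if_pos h1, if_pos h2, if_pos h2]
      simp
    · rw [if_pos (hcond.mpr h1), if_pos h1, if_neg h2, if_neg h2]
      simp
    · have h3 : ¬ (q * u * q = p) := fun h => h1 (hcond.mp h)
      rw [if_neg h3, if_pos h2, if_neg h1, if_pos h2]
      simp
    · have h3 : ¬ (q * u * q = p) := fun h => h1 (hcond.mp h)
      rw [if_neg h3, if_neg h2, if_neg h1, if_neg h2]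
      simp
  -- iterate
  have pow_apply : ∀ (n : ℕ) (u : W) (δ : ℤˣ),
      ((sigmaPerm cs i * sigmaPerm cs j) ^ n) (u, δ) =
        (c^n * u * (c^n)⁻¹,
          (∏ l ∈ Finset.range n,
            ((if c^l * u * (c^l)⁻¹ = q*p*q then (-1 : ℤˣ) else 1) *
             (if c^l * u * (c^l)⁻¹ = q then (-1 : ℤˣ) else 1))) * δ) := by
    intro n
    induction n with
    | zero => intro u δ; simp
    | succ n ih =>
      intro u δ
      rw [pow_succ', Equiv.Perm.mul_apply, ih u δ, tau_apply]
      refine Prod.ext ?_ ?_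
      · show c * (c^n * u * (c^n)⁻¹) * c⁻¹ = c^(n+1) * u * (c^(n+1))⁻¹
        rw [pow_succ, mul_inv_rev]; group
      · rw [Finset.prod_range_succ]
        exact (mul_left_comm _ _ _).trans (mul_assoc _ _ _).symm
  apply Equiv.ext
  rintro ⟨t, ε⟩
  have bs := braid_sign p q hpp hqq (M i j) (by rw [← hc]; exact hcm) t
  rw [← hc] at bs
  rw [pow_apply (M i j) t ε, bs, hcm]
  simp

/-- The sign homomorphism `W →* Perm (W × ℤˣ)`. -/
noncomputable def signHom (cs : CoxeterSystem M W) : W →* Equiv.Perm (W × ℤˣ) :=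
  cs.lift ⟨fun i => sigmaPerm cs i, sigma_liftable cs⟩

lemma signHom_simple (cs : CoxeterSystem M W) (i : B) :
    signHom cs (cs.simple i) = sigmaPerm cs i :=
  cs.lift_apply_simple (sigma_liftable cs) i

/-- sign of `t` under the permutation of `w`. -/
noncomputable def eta (cs : CoxeterSystem M W) (w t : W) : ℤˣ :=
  ((signHom cs w) (t, 1)).2

/-- word formula for `signHom`. -/
lemma signHom_wordProd_apply (cs : CoxeterSystem M W) (ω : List B) (t : W) (ε : ℤˣ) :
    (signHom cs (cs.wordProd ω)) (t, ε) =
      (cs.wordProd ω * t * (cs.wordProd ω)⁻¹,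
        ((cs.rightInvSeq ω).map (fun r => if t = r then (-1 : ℤˣ) else 1)).prod * ε) := by
  induction ω generalizing t ε with
  | nil => simp [cs.wordProd_nil]
  | cons i ω ih =>
    have hris : cs.rightInvSeq (i :: ω)
        = ((cs.wordProd ω)⁻¹ * cs.simple i * cs.wordProd ω) :: cs.rightInvSeq ω := rfl
    rw [cs.wordProd_cons, map_mul, Equiv.Perm.mul_apply, ih t ε, signHom_simple,
      sigmaPerm_apply, hris]
    set v := cs.wordProd ω
    set S := ((cs.rightInvSeq ω).map (fun r => if t = r then (-1 : ℤˣ) else 1)).prod with hS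
    refine Prod.ext ?_ ?_
    · show cs.simple i * (v * t * v⁻¹) * cs.simple i = (cs.simple i * v) * t * (cs.simple i * v)⁻¹
      rw [mul_inv_rev, cs.inv_simple]; group
    · show (if v * t * v⁻¹ = cs.simple i then -(S * ε) else S * ε)
        = ((if t = v⁻¹ * cs.simple i * v then (-1:ℤˣ) else 1) * S) * ε
      have hcond : (v * t * v⁻¹ = cs.simple i) ↔ (t = v⁻¹ * cs.simple i * v) := by
        constructor
        · intro h; rw [← h]; group
        · intro h; rw [h]; group
      by_cases h : v * t * v⁻¹ = cs.simple i
      · rw [if_pos h, if_pos (hcond.mp h)]; simp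
      · rw [if_neg h, if_neg (fun hh => h (hcond.mpr hh))]; simp

lemma signHom_apply (cs : CoxeterSystem M W) (w t : W) (ε : ℤˣ) :
    (signHom cs w) (t, ε) = (w * t * w⁻¹, eta cs w t * ε) := by
  obtain ⟨ω, _, rfl⟩ := cs.exists_reduced_word' w
  rw [signHom_wordProd_apply]
  have h1 : eta cs (cs.wordProd ω) t
      = ((cs.rightInvSeq ω).map (fun r => if t = r then (-1 : ℤˣ) else 1)).prod := by
    unfold eta
    rw [signHom_wordProd_apply]
    simp
  rw [h1]

lemma eta_wordProd (cs : CoxeterSystem M W) (ω : List B) (t : W) :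
    eta cs (cs.wordProd ω) t
      = ((cs.rightInvSeq ω).map (fun r => if t = r then (-1 : ℤˣ) else 1)).prod := by
  unfold eta
  rw [signHom_wordProd_apply]
  simp

lemma mem_rightInvSeq_of_eta_ne_one (cs : CoxeterSystem M W) (ω : List B) (t : W)
    (h : eta cs (cs.wordProd ω) t ≠ 1) : t ∈ cs.rightInvSeq ω := by
  by_contra hmem
  apply h
  rw [eta_wordProd]
  apply List.prod_eq_one
  intro x hx
  rw [List.mem_map] at hx
  obtain ⟨r, hr, rfl⟩ := hx
  rw [if_neg]
  intro he
  exact hmem (he ▸ hr)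

lemma eta_mul (cs : CoxeterSystem M W) (a b t : W) :
    eta cs (a * b) t = eta cs b t * eta cs a (b * t * b⁻¹) := by
  have key : (signHom cs (a * b)) (t, 1)
      = ((a * b) * t * (a * b)⁻¹, eta cs a (b * t * b⁻¹) * (eta cs b t * 1)) := by
    rw [map_mul, Equiv.Perm.mul_apply, signHom_apply cs b t 1,
      signHom_apply cs a (b * t * b⁻¹) (eta cs b t * 1)]
    refine Prod.ext ?_ rfl
    show a * (b * t * b⁻¹) * a⁻¹ = (a * b) * t * (a * b)⁻¹
    rw [mul_inv_rev]; group
  show ((signHom cs (a * b)) (t, 1)).2 = _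
  rw [key]
  show eta cs a (b * t * b⁻¹) * (eta cs b t * 1) = _
  rw [mul_one, mul_comm]

lemma eta_one (cs : CoxeterSystem M W) (t : W) : eta cs 1 t = 1 := by
  unfold eta
  rw [map_one]
  rfl

lemma eta_simple (cs : CoxeterSystem M W) (i : B) (t : W) :
    eta cs (cs.simple i) t = if t = cs.simple i then -1 else 1 := by
  unfold eta
  rw [signHom_simple, sigmaPerm_apply]

lemma eta_palindrome (cs : CoxeterSystem M W) (ω : List B) (i : B) :
    eta cs (cs.wordProd ω * cs.simple i * (cs.wordProd ω)⁻¹)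
      (cs.wordProd ω * cs.simple i * (cs.wordProd ω)⁻¹) = -1 := by
  induction ω with
  | nil =>
    simp only [cs.wordProd_nil, one_mul, inv_one, mul_one]
    rw [eta_simple, if_pos rfl]
  | cons j ω ih =>
    obtain ⟨t', ht'⟩ : ∃ x, x = cs.wordProd ω * cs.simple i * (cs.wordProd ω)⁻¹ := ⟨_, rfl⟩
    have ih' : eta cs t' t' = -1 := by rw [ht']; exact ih
    have hformula : cs.wordProd (j :: ω) * cs.simple i * (cs.wordProd (j :: ω))⁻¹
        = (cs.simple j * t') * cs.simple j := by
      rw [ht', cs.wordProd_cons, mul_inv_rev, cs.inv_simple]; group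
    rw [hformula]
    by_cases hcase : (cs.simple j * t') * cs.simple j = cs.simple j
    · rw [hcase, eta_simple, if_pos rfl]
    · have ht'j : t' ≠ cs.simple j := by
        intro h; apply hcase; rw [h]; simp
      rw [eta_mul cs (cs.simple j * t') (cs.simple j) ((cs.simple j * t') * cs.simple j)]
      have e2 : cs.simple j * ((cs.simple j * t') * cs.simple j) * (cs.simple j)⁻¹ = t' := by
        rw [cs.inv_simple]
        calc cs.simple j * (cs.simple j * t' * cs.simple j) * cs.simple j
            = cs.simple j * (cs.simple j * (t' * (cs.simple j * cs.simple j))) := by group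
          _ = t' := by rw [cs.simple_mul_simple_self, mul_one, cs.simple_mul_simple_cancel_left]
      rw [eta_simple, if_neg hcase, one_mul, e2]
      rw [eta_mul cs (cs.simple j) t' t']
      have e3 : t' * t' * t'⁻¹ = t' := by group
      rw [e3, eta_simple, if_neg ht'j, mul_one]
      exact ih'

lemma eta_reflection_self (cs : CoxeterSystem M W) {t : W} (ht : cs.IsReflection t) :
    eta cs t t = -1 := by
  obtain ⟨a, i, rfl⟩ := ht
  obtain ⟨ω, _, rfl⟩ := cs.exists_reduced_word' a
  exact eta_palindrome cs ω i

lemma eta_eq_one_of_lt (cs : CoxeterSystem M W) :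
    ∀ n (w t : W), cs.IsReflection t → cs.length w = n →
      cs.length w < cs.length (w * t) → eta cs w t = 1 := by
  intro n
  induction n using Nat.strong_induction_on with
  | _ n ih =>
    intro w t ht hn hlt
    rcases Nat.eq_zero_or_pos n with h0 | hpos
    · have hw : w = 1 := cs.length_eq_zero_iff.mp (by omega)
      rw [hw]; exact eta_one cs t
    · have hwne : w ≠ 1 := by
        intro h; rw [h, cs.length_one] at hn; omega
      obtain ⟨i, hdesc⟩ := cs.exists_rightDescent_of_ne_one hwne
      have hdesc' : cs.length (w * cs.simple i) < cs.length w := hdesc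
      have hlen1 : cs.length (w * cs.simple i) + 1 = cs.length w := by
        rcases cs.length_mul_simple w i with h | h
        · omega
        · exact h
      have htne : t ≠ cs.simple i := by
        intro h; rw [h] at hlt; omega
      have hw_decomp : w = (w * cs.simple i) * cs.simple i := by
        rw [cs.simple_mul_simple_cancel_right]
      have ht' : cs.IsReflection (cs.simple i * t * cs.simple i) := by
        have h2 := ht.conj (cs.simple i)
        rwa [cs.inv_simple] at h2
      have hco : eta cs w t = eta cs (w * cs.simple i) (cs.simple i * t * cs.simple i) := by
        conv_lhs => rw [hw_decomp]
        rw [eta_mul, eta_simple, if_neg htne, one_mul, cs.inv_simple]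
      rw [hco]
      -- length of (w * s i) * (s i * t * s i) = w * t * s i
      have hprod : (w * cs.simple i) * (cs.simple i * t * cs.simple i)
          = w * t * cs.simple i := by
        calc (w * cs.simple i) * (cs.simple i * t * cs.simple i)
            = w * (cs.simple i * (cs.simple i * (t * cs.simple i))) := by group
        _ = w * t * cs.simple i := by rw [cs.simple_mul_simple_cancel_left]; group
      have hb : cs.length (w * t) > n := by omega
      have hlen2 : cs.length (w * t * cs.simple i) + 1 = cs.length (w * t)
          ∨ cs.length (w * t * cs.simple i) = cs.length (w * t) + 1 := by
        rcases cs.length_mul_simple (w * t) i with h | h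
        · right; exact h
        · left; exact h
      have hgt : cs.length (w * cs.simple i)
          < cs.length ((w * cs.simple i) * (cs.simple i * t * cs.simple i)) := by
        rw [hprod]
        omega
      exact ih (n - 1) (by omega) (w * cs.simple i) (cs.simple i * t * cs.simple i)
        ht' (by omega) hgt

lemma eta_mul_reflection (cs : CoxeterSystem M W) {t : W} (ht : cs.IsReflection t) (w : W) :
    eta cs (w * t) t = -eta cs w t := by
  rw [eta_mul cs w t t]
  have h1 : t * t * t⁻¹ = t := by rw [ht.mul_self, one_mul, ht.inv]
  rw [h1, eta_reflection_self cs ht]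
  rw [mul_comm]
  simp

theorem strong_exchange_right (cs : CoxeterSystem M W) {ω : List B} (hred : cs.IsReduced ω)
    {t : W} (ht : cs.IsReflection t)
    (hlt : cs.length (cs.wordProd ω * t) < cs.length (cs.wordProd ω)) :
    t ∈ cs.rightInvSeq ω := by
  have h1 : cs.length (cs.wordProd ω * t)
      < cs.length ((cs.wordProd ω * t) * t) := by
    rw [mul_assoc, ht.mul_self, mul_one]; exact hlt
  have h2 : eta cs (cs.wordProd ω * t) t = 1 :=
    eta_eq_one_of_lt cs _ (cs.wordProd ω * t) t ht rfl h1
  have h3 : eta cs (cs.wordProd ω) t = -1 := by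
    have h4 := eta_mul_reflection cs ht (cs.wordProd ω * t)
    rw [mul_assoc, ht.mul_self, mul_one] at h4
    rw [h4, h2]
  apply mem_rightInvSeq_of_eta_ne_one cs ω t
  rw [h3]; decide

theorem strong_exchange_left (cs : CoxeterSystem M W) {ω : List B} (hred : cs.IsReduced ω)
    {t : W} (ht : cs.IsReflection t)
    (hlt : cs.length (t * cs.wordProd ω) < cs.length (cs.wordProd ω)) :
    t ∈ cs.leftInvSeq ω := by
  have hred' : cs.IsReduced ω.reverse := (cs.isReduced_reverse_iff ω).mpr hred
  have hp : cs.wordProd ω.reverse = (cs.wordProd ω)⁻¹ := cs.wordProd_reverse ω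
  have hlt' : cs.length (cs.wordProd ω.reverse * t) < cs.length (cs.wordProd ω.reverse) := by
    rw [hp]
    have e1 : cs.length ((cs.wordProd ω)⁻¹ * t) = cs.length (t * cs.wordProd ω) := by
      have e2 : ((cs.wordProd ω)⁻¹ * t)⁻¹ = t * cs.wordProd ω := by
        rw [mul_inv_rev, inv_inv, ht.inv]
      rw [← e2, cs.length_inv]
    have e3 : cs.length ((cs.wordProd ω)⁻¹) = cs.length (cs.wordProd ω) := cs.length_inv _
    omega
  have hmem := strong_exchange_right cs hred' ht hlt'
  rw [cs.rightInvSeq_reverse, List.mem_reverse] at hmem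
  exact hmem

lemma exists_eraseIdx_of_mem_leftInvSeq (cs : CoxeterSystem M W) {ω : List B} {t : W}
    (h : t ∈ cs.leftInvSeq ω) :
    ∃ k, k < ω.length ∧ t * cs.wordProd ω = cs.wordProd (ω.eraseIdx k) := by
  obtain ⟨k, hk, hget⟩ := List.mem_iff_getElem.mp h
  rw [cs.length_leftInvSeq] at hk
  refine ⟨k, hk, ?_⟩
  have hgetD : (cs.leftInvSeq ω).getD k 1 = t := by
    rw [List.getD_eq_getElem _ 1 (by rwa [cs.length_leftInvSeq])]
    exact hget
  rw [← hgetD]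
  exact cs.getD_leftInvSeq_mul_wordProd ω k

lemma wordProd_mem_parabolic (cs : CoxeterSystem M W) (J : Set B) {ω : List B}
    (h : ∀ b ∈ ω, b ∈ J) : cs.wordProd ω ∈ parabolic cs J := by
  induction ω with
  | nil => rw [cs.wordProd_nil]; exact one_mem _
  | cons i ω ih =>
    rw [cs.wordProd_cons]
    refine mul_mem ?_ (ih (fun b hb => h b (List.mem_cons_of_mem i hb)))
    exact Subgroup.subset_closure ⟨i, h i (List.mem_cons_self), rfl⟩

lemma exists_reduced_sublist (cs : CoxeterSystem M W) :
    ∀ ω : List B, ∃ ω', ω'.Sublist ω ∧ cs.IsReduced ω' ∧ cs.wordProd ω' = cs.wordProd ω := by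
  suffices H : ∀ n (ω : List B), ω.length ≤ n →
      ∃ ω', ω'.Sublist ω ∧ cs.IsReduced ω' ∧ cs.wordProd ω' = cs.wordProd ω by
    exact fun ω => H ω.length ω le_rfl
  intro n
  induction n with
  | zero =>
    intro ω hω
    have : ω = [] := List.length_eq_zero_iff.mp (by omega)
    subst this
    exact ⟨[], List.Sublist.refl _, by simp [CoxeterSystem.IsReduced], rfl⟩
  | succ n ih =>
    intro ω hω
    by_cases hred : cs.IsReduced ω
    · exact ⟨ω, List.Sublist.refl ω, hred, rfl⟩
    have hωne : ω ≠ [] := by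
      rintro rfl
      exact hred (by simp [CoxeterSystem.IsReduced])
    have hωpos : 0 < ω.length := List.length_pos_iff.mpr hωne
    have hex : ∃ l, ¬ cs.IsReduced (ω.take (l+1)) := by
      refine ⟨ω.length - 1, ?_⟩
      rw [show ω.length - 1 + 1 = ω.length by omega, List.take_length]
      exact hred
    have hl_le : Nat.find hex ≤ ω.length - 1 := Nat.find_le (by
      rw [show ω.length - 1 + 1 = ω.length by omega, List.take_length]
      exact hred)
    set l := Nat.find hex with hldef
    have hl : ¬ cs.IsReduced (ω.take (l+1)) := Nat.find_spec hex
    have hl_lt : l < ω.length := by omega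
    have htake_red : cs.IsReduced (ω.take l) := by
      rcases Nat.eq_zero_or_pos l with h0 | hpos
      · rw [h0]; simp [CoxeterSystem.IsReduced]
      · have h1 := Nat.find_min hex (show l - 1 < l by omega)
        rw [not_not] at h1
        rwa [show l - 1 + 1 = l by omega] at h1
    have htake_succ : ω.take (l+1) = ω.take l ++ [ω[l]] := by
      rw [List.take_succ, List.getElem?_eq_getElem hl_lt]
      rfl
    have hlen_take : cs.length (cs.wordProd (ω.take l)) = l := by
      have h1 : cs.length (cs.wordProd (ω.take l)) = (ω.take l).length := htake_red
      rw [h1, List.length_take]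
      omega
    have hprod : cs.wordProd (ω.take (l+1)) = cs.wordProd (ω.take l) * cs.simple ω[l] := by
      rw [htake_succ, cs.wordProd_append, cs.wordProd_singleton]
    have hdrop : cs.length (cs.wordProd (ω.take l) * cs.simple ω[l])
        < cs.length (cs.wordProd (ω.take l)) := by
      rcases cs.length_mul_simple (cs.wordProd (ω.take l)) ω[l] with h | h
      · exfalso
        apply hl
        show cs.length (cs.wordProd (ω.take (l+1))) = (ω.take (l+1)).length
        rw [hprod, h, hlen_take, List.length_take]
        omega
      · omega
    have hmem := strong_exchange_right cs htake_red (cs.isReflection_simple ω[l]) hdrop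
    obtain ⟨k, hk, hkeq⟩ := List.mem_iff_getElem.mp hmem
    rw [cs.length_rightInvSeq] at hk
    have herase : cs.wordProd (ω.take l) * cs.simple ω[l]
        = cs.wordProd ((ω.take l).eraseIdx k) := by
      rw [← cs.wordProd_mul_getD_rightInvSeq (ω.take l) k]
      congr 1
      rw [List.getD_eq_getElem _ 1 (by rwa [cs.length_rightInvSeq])]
      exact hkeq.symm
    have hprod'' : cs.wordProd ((ω.take l).eraseIdx k ++ ω.drop (l+1)) = cs.wordProd ω := by
      rw [cs.wordProd_append, ← herase]
      calc cs.wordProd (ω.take l) * cs.simple ω[l] * cs.wordProd (ω.drop (l+1))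
          = cs.wordProd (ω.take (l+1)) * cs.wordProd (ω.drop (l+1)) := by rw [hprod]
        _ = cs.wordProd ω := by rw [← cs.wordProd_append, List.take_append_drop]
    have hsub'' : ((ω.take l).eraseIdx k ++ ω.drop (l+1)).Sublist ω := by
      have h1 : (ω.take l).eraseIdx k <+ ω.take l := List.eraseIdx_sublist _ _
      have h2 : (ω.take l).eraseIdx k ++ ω.drop (l+1) <+ ω.take l ++ ω.drop (l+1) :=
        h1.append (List.Sublist.refl _)
      rw [← List.eraseIdx_eq_take_drop_succ ω l] at h2
      exact h2.trans (List.eraseIdx_sublist ω l)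
    have hlen'' : ((ω.take l).eraseIdx k ++ ω.drop (l+1)).length ≤ n := by
      rw [List.length_append, List.length_eraseIdx, if_pos hk, List.length_take,
        List.length_drop]
      omega
    obtain ⟨ω', hsub', hred', hprodeq⟩ := ih _ hlen''
    exact ⟨ω', hsub'.trans hsub'', hred', by rw [hprodeq, hprod'']⟩

/-- every element of the parabolic subgroup has a reduced word with letters in `J`. -/
lemma parabolic_exists_reduced_word (cs : CoxeterSystem M W) (J : Set B) {v : W}
    (hv : v ∈ parabolic cs J) :
    ∃ ν : List B, (∀ b ∈ ν, b ∈ J) ∧ cs.IsReduced ν ∧ cs.wordProd ν = v := by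
  have main : ∃ ν : List B, (∀ b ∈ ν, b ∈ J) ∧ cs.wordProd ν = v := by
    induction hv using Subgroup.closure_induction with
    | mem x hx =>
      obtain ⟨j, hj, rfl⟩ := hx
      exact ⟨[j], by simpa using hj, cs.wordProd_singleton j⟩
    | one => exact ⟨[], by simp, cs.wordProd_nil⟩
    | mul x y hx hy ihx ihy =>
      obtain ⟨ν₁, h₁, e₁⟩ := ihx
      obtain ⟨ν₂, h₂, e₂⟩ := ihy
      refine ⟨ν₁ ++ ν₂, ?_, by rw [cs.wordProd_append, e₁, e₂]⟩
      intro b hb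
      rcases List.mem_append.mp hb with h | h
      · exact h₁ b h
      · exact h₂ b h
    | inv x hx ihx =>
      obtain ⟨ν, h₁, e₁⟩ := ihx
      exact ⟨ν.reverse, fun b hb => h₁ b (List.mem_reverse.mp hb),
        by rw [cs.wordProd_reverse, e₁]⟩
  obtain ⟨ν, hν, hprod⟩ := main
  obtain ⟨ν', hsub, hred, hprodeq⟩ := exists_reduced_sublist cs ν
  exact ⟨ν', fun b hb => hν b (hsub.mem hb), hred, by rw [hprodeq, hprod]⟩

/-- additivity of length over minimal coset representatives (word version). -/
lemma length_mul_wordProd_of_minRep (cs : CoxeterSystem M W) (J : Set B) {w : W}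
    (hw : w ∈ minReps cs J) :
    ∀ ν : List B, (∀ b ∈ ν, b ∈ J) → cs.IsReduced ν →
      cs.length (w * cs.wordProd ν) = cs.length w + ν.length := by
  intro ν
  induction ν using List.reverseRecOn with
  | nil => intro _ _; simp
  | append_singleton ν' j ih =>
    intro hmem hred
    have hmem' : ∀ b ∈ ν', b ∈ J := fun b hb => hmem b (List.mem_append_left _ hb)
    have hj : j ∈ J := hmem j (List.mem_append_right _ (List.mem_singleton_self j))
    have hred' : cs.IsReduced ν' := by
      have h1 := hred.take ν'.length
      rwa [List.take_left] at h1
    have ih' := ih hmem' hred'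
    obtain ⟨ωw, hωw_red, hωw⟩ := cs.exists_reduced_word' w
    have hωw_len : ωw.length = cs.length w := by
      have := hωw_red; rw [CoxeterSystem.IsReduced, ← hωw] at this; omega
    have hfact_red : cs.IsReduced (ωw ++ ν') := by
      show cs.length (cs.wordProd (ωw ++ ν')) = (ωw ++ ν').length
      rw [cs.wordProd_append, ← hωw, ih', List.length_append]
      omega
    have hfact_prod : cs.wordProd (ωw ++ ν') = w * cs.wordProd ν' := by
      rw [cs.wordProd_append, ← hωw]
    have hνlen : (ν' ++ [j]).length = ν'.length + 1 := by simp
    rw [cs.wordProd_append, cs.wordProd_singleton, hνlen, ← mul_assoc]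
    rcases cs.length_mul_simple (w * cs.wordProd ν') j with h | h
    · rw [h, ih']; omega
    · exfalso
      -- s j is a right inversion of w * π ν' : apply strong exchange to ωw ++ ν'
      have hinv : cs.length (cs.wordProd (ωw ++ ν') * cs.simple j)
          < cs.length (cs.wordProd (ωw ++ ν')) := by
        rw [hfact_prod]; omega
      have hmem2 := strong_exchange_right cs hfact_red (cs.isReflection_simple j) hinv
      obtain ⟨k, hk, hkeq⟩ := List.mem_iff_getElem.mp hmem2
      rw [cs.length_rightInvSeq, List.length_append] at hk
      have herase : w * cs.wordProd ν' * cs.simple j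
          = cs.wordProd ((ωw ++ ν').eraseIdx k) := by
        rw [← cs.wordProd_mul_getD_rightInvSeq (ωw ++ ν') k, hfact_prod]
        congr 1
        rw [List.getD_eq_getElem _ 1 (by rw [cs.length_rightInvSeq, List.length_append]; omega)]
        exact hkeq.symm
      rcases Nat.lt_or_ge k ωw.length with hcase | hcase
      · -- deletion in the w-part: contradiction with minimality of w
        rw [List.eraseIdx_append_of_lt_length hcase, cs.wordProd_append] at herase
        have hρ : cs.wordProd (ωw.eraseIdx k)
            = w * (cs.wordProd ν' * cs.simple j * (cs.wordProd ν')⁻¹) := by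
          have h2 : cs.wordProd (ωw.eraseIdx k) * cs.wordProd ν'
              = w * cs.wordProd ν' * cs.simple j := herase.symm
          have h3 := congrArg (fun z => z * (cs.wordProd ν')⁻¹) h2
          simp only [mul_assoc, mul_inv_cancel, mul_one] at h3
          rw [h3]; group
        have hρ_mem : cs.wordProd ν' * cs.simple j * (cs.wordProd ν')⁻¹ ∈ parabolic cs J := by
          refine mul_mem (mul_mem ?_ ?_) (inv_mem ?_)
          · exact wordProd_mem_parabolic cs J hmem'
          · exact Subgroup.subset_closure ⟨j, hj, rfl⟩
          · exact wordProd_mem_parabolic cs J hmem'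
        have hlow : cs.length (cs.wordProd (ωw.eraseIdx k)) < cs.length w := by
          have h4 := cs.length_wordProd_le (ωw.eraseIdx k)
          rw [List.length_eraseIdx, if_pos hcase] at h4
          omega
        have hmin := hw _ hρ_mem
        rw [← hρ] at hmin
        omega
      · -- deletion in the ν'-part: contradiction with reducedness of ν' ++ [j]
        rw [List.eraseIdx_append_of_length_le hcase, cs.wordProd_append, ← hωw] at herase
        have h5 : cs.wordProd ν' * cs.simple j = cs.wordProd (ν'.eraseIdx (k - ωw.length)) := by
          apply mul_left_cancel (a := w)
          rw [← mul_assoc]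
          exact herase
        have h6 : cs.length (cs.wordProd ν' * cs.simple j) ≤ ν'.length - 1 := by
          rw [h5]
          have h7 := cs.length_wordProd_le (ν'.eraseIdx (k - ωw.length))
          rw [List.length_eraseIdx, if_pos (by omega)] at h7
          exact h7
        have h8 : cs.length (cs.wordProd (ν' ++ [j])) = ν'.length + 1 := by
          rw [hred]; simp
        rw [cs.wordProd_append, cs.wordProd_singleton] at h8
        omega

/-- additivity of length over minimal coset representatives. -/
lemma length_mul_of_minRep (cs : CoxeterSystem M W) (J : Set B) {w v : W}
    (hw : w ∈ minReps cs J) (hv : v ∈ parabolic cs J) :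
    cs.length (w * v) = cs.length w + cs.length v := by
  obtain ⟨ν, hν, hred, rfl⟩ := parabolic_exists_reduced_word cs J hv
  rw [length_mul_wordProd_of_minRep cs J hw ν hν hred, hred]

/-- uniqueness of the minimal representative within a coset. -/
lemma minRep_unique (cs : CoxeterSystem M W) (J : Set B) {w w' : W}
    (hw : w ∈ minReps cs J) (hw' : w' ∈ minReps cs J) {b : W} (hb : b ∈ parabolic cs J)
    (heq : w' = w * b) : w' = w := by
  have h1 : cs.length w' = cs.length w + cs.length b := by
    rw [heq]; exact length_mul_of_minRep cs J hw hb
  have h2 : cs.length w = cs.length w' + cs.length b⁻¹ := by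
    have : w = w' * b⁻¹ := by rw [heq, mul_assoc, mul_inv_cancel, mul_one]
    rw [this]; exact length_mul_of_minRep cs J hw' (inv_mem hb)
  have hb0 : cs.length b = 0 := by
    rw [cs.length_inv] at h2; omega
  have : b = 1 := cs.length_eq_zero_iff.mp hb0
  rw [heq, this, mul_one]

lemma sublist_eraseIdx {α : Type*} : ∀ {l' l : List α}, l'.Sublist l →
    l'.length + 1 = l.length → ∃ k, k < l.length ∧ l' = l.eraseIdx k := by
  intro l' l h
  induction h with
  | slnil => intro hlen; simp at hlen
  | @cons l₁ l₂ a h ih =>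
    intro hlen
    have he : l₁ = l₂ := h.eq_of_length (by simpa using hlen)
    exact ⟨0, by simp, by simp [he]⟩
  | @cons_cons l₁ l₂ a h ih =>
    intro hlen
    obtain ⟨k, hk, rfl⟩ := ih (by simpa using hlen)
    exact ⟨k + 1, by simp [Nat.succ_lt_succ hk], by rw [List.eraseIdx_cons_succ]⟩

lemma length_eraseIdx_mul_lt (cs : CoxeterSystem M W) {ω : List B} (hred : cs.IsReduced ω)
    {k k' : ℕ} (hkk : k < k') (hk' : k' < ω.length)
    (hred_erase : cs.IsReduced (ω.eraseIdx k)) :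
    cs.length (cs.wordProd (ω.eraseIdx k) * (cs.rightInvSeq ω).getD k' 1)
      < cs.length (cs.wordProd (ω.eraseIdx k)) := by
  have hidx : (k + 1) + (k' - (k + 1)) = k' := by omega
  have hlt2 : k' - (k + 1) < ((cs.rightInvSeq ω).drop (k + 1)).length := by
    rw [List.length_drop, cs.length_rightInvSeq]; omega
  have hmem0 : ((cs.rightInvSeq ω).drop (k + 1))[k' - (k + 1)]'hlt2
      ∈ (cs.rightInvSeq ω).drop (k + 1) := List.getElem_mem _
  have heq0 : ((cs.rightInvSeq ω).drop (k + 1))[k' - (k + 1)]'hlt2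
      = (cs.rightInvSeq ω).getD k' 1 := by
    rw [List.getElem_drop, List.getD_eq_getElem _ 1 (by rw [cs.length_rightInvSeq]; omega)]
    simp only [hidx]
  rw [heq0] at hmem0
  -- transfer membership into the right inversion sequence of the erased word
  have hmem1 : (cs.rightInvSeq ω).getD k' 1 ∈ cs.rightInvSeq (ω.drop (k + 1)) := by
    rw [cs.rightInvSeq_drop]; exact hmem0
  have hmem2 : (cs.rightInvSeq ω).getD k' 1 ∈ cs.rightInvSeq (ω.eraseIdx k) := by
    rw [List.eraseIdx_eq_take_drop_succ]
    have h3 := cs.rightInvSeq_drop (ω.take k ++ ω.drop (k + 1)) (ω.take k).length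
    rw [List.drop_left] at h3
    have h4 : (cs.rightInvSeq ω).getD k' 1
        ∈ (cs.rightInvSeq (ω.take k ++ ω.drop (k + 1))).drop (ω.take k).length := by
      rw [← h3]; exact hmem1
    exact List.mem_of_mem_drop h4
  exact (cs.isRightInversion_of_mem_rightInvSeq hred_erase hmem2).2

lemma cover_aux (cs : CoxeterSystem M W) (J : Set B) {w w' u v : W}
    (hw : w ∈ minReps cs J) (hw' : w' ∈ minReps cs J) (hne : w' ≠ w)
    (hu : u ∈ parabolic cs J) (hv : v ∈ parabolic cs J)
    (hcov : bruhatCov cs (w' * u) (w * v)) {ωw : List B} (hωw_red : cs.IsReduced ωw)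
    (hωw : cs.wordProd ωw = w) :
    ∃ k, k < ωw.length ∧ cs.wordProd (ωw.eraseIdx k) = w' * u * v⁻¹ ∧
      cs.IsReduced (ωw.eraseIdx k) := by
  obtain ⟨⟨⟨ω, hω_red, hω_prod, ω', hsub, hω'_red, hω'_prod⟩, hne2⟩, hlen⟩ := hcov
  have hlω : ω.length = cs.length (w * v) := by
    rw [← hω_prod]; exact hω_red.symm
  have hlω' : ω'.length = cs.length (w' * u) := by
    rw [← hω'_prod]; exact hω'_red.symm
  have hsublen : ω'.length + 1 = ω.length := by omega
  obtain ⟨k₀, hk₀, rfl⟩ := sublist_eraseIdx hsub hsublen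
  have hgetlt : k₀ < (cs.leftInvSeq ω).length := by rw [cs.length_leftInvSeq]; omega
  have ht_mem : (cs.leftInvSeq ω).getD k₀ 1 ∈ cs.leftInvSeq ω := by
    rw [List.getD_eq_getElem _ 1 hgetlt]; exact List.getElem_mem _
  have ht : cs.IsReflection ((cs.leftInvSeq ω).getD k₀ 1) :=
    cs.isReflection_of_mem_leftInvSeq ω ht_mem
  have htz : (cs.leftInvSeq ω).getD k₀ 1 * (w * v) = w' * u := by
    rw [← hω_prod, cs.getD_leftInvSeq_mul_wordProd, hω'_prod]
  obtain ⟨ν, hν_mem, hν_red, hν_prod⟩ := parabolic_exists_reduced_word cs J hv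
  have hadd : cs.length (w * v) = cs.length w + cs.length v := length_mul_of_minRep cs J hw hv
  have hωw_len : ωw.length = cs.length w := by
    have h1 : cs.length (cs.wordProd ωw) = ωw.length := hωw_red
    rw [hωw] at h1; omega
  have hν_len : ν.length = cs.length v := by
    have h1 : cs.length (cs.wordProd ν) = ν.length := hν_red
    rw [hν_prod] at h1; omega
  have hfact_prod : cs.wordProd (ωw ++ ν) = w * v := by
    rw [cs.wordProd_append, hωw, hν_prod]
  have hfact_red : cs.IsReduced (ωw ++ ν) := by
    show cs.length (cs.wordProd (ωw ++ ν)) = (ωw ++ ν).length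
    rw [hfact_prod, hadd, List.length_append]
    omega
  have hlt : cs.length ((cs.leftInvSeq ω).getD k₀ 1 * cs.wordProd (ωw ++ ν))
      < cs.length (cs.wordProd (ωw ++ ν)) := by
    rw [hfact_prod, htz]
    omega
  have hmem := strong_exchange_left cs hfact_red ht hlt
  obtain ⟨k, hk, hkerase⟩ := exists_eraseIdx_of_mem_leftInvSeq cs hmem
  rw [hfact_prod, htz] at hkerase
  rw [List.length_append] at hk
  rcases Nat.lt_or_ge k ωw.length with hcase | hcase
  · rw [List.eraseIdx_append_of_lt_length hcase, cs.wordProd_append, hν_prod] at hkerase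
    -- hkerase : w' * u = π(ωw.eraseIdx k) * v
    have heq : cs.wordProd (ωw.eraseIdx k) = w' * u * v⁻¹ := by
      have h2 := congrArg (fun z => z * v⁻¹) hkerase
      simp only [mul_assoc, mul_inv_cancel, mul_one] at h2
      rw [← mul_assoc] at h2
      exact h2.symm
    refine ⟨k, hcase, heq, ?_⟩
    have h1 : cs.length (w' * u * v⁻¹) ≤ ωw.length - 1 := by
      rw [← heq]
      refine le_trans (cs.length_wordProd_le _) ?_
      rw [List.length_eraseIdx, if_pos hcase]
    have h2 : cs.length (w' * u) ≤ cs.length (w' * u * v⁻¹) + cs.length v := by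
      have h3 := cs.length_mul_le (w' * u * v⁻¹) v
      rw [mul_assoc, inv_mul_cancel, mul_one] at h3
      exact h3
    show cs.length (cs.wordProd (ωw.eraseIdx k)) = (ωw.eraseIdx k).length
    rw [heq, List.length_eraseIdx, if_pos hcase]
    omega
  · exfalso
    rw [List.eraseIdx_append_of_length_le hcase, cs.wordProd_append, hωw] at hkerase
    have hmem2 : cs.wordProd (ν.eraseIdx (k - ωw.length)) ∈ parabolic cs J :=
      wordProd_mem_parabolic cs J
        (fun b hb => hν_mem b ((List.eraseIdx_sublist ν (k - ωw.length)).subset hb))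
    have hb : w⁻¹ * w' ∈ parabolic cs J := by
      have h3 : w⁻¹ * w' = cs.wordProd (ν.eraseIdx (k - ωw.length)) * u⁻¹ := by
        calc w⁻¹ * w' = w⁻¹ * (w' * u) * u⁻¹ := by group
        _ = w⁻¹ * (w * cs.wordProd (ν.eraseIdx (k - ωw.length))) * u⁻¹ := by rw [hkerase]
        _ = cs.wordProd (ν.eraseIdx (k - ωw.length)) * u⁻¹ := by group
      rw [h3]
      exact mul_mem hmem2 (inv_mem hu)
    exact hne (minRep_unique cs J hw hw' hb (by group))

/-- If w', w ∈ W^J with w' < w and u ∈ W_J, then w'u is covered by at most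
one element of the coset wW_J in Bruhat order. -/
theorem covered_by_at_most_one_in_coset
    (cs : CoxeterSystem M W) (J : Set B) (w' w : W)
    (hw' : w' ∈ minReps cs J) (hw : w ∈ minReps cs J) (hlt : bruhatLT cs w' w)
    (u : W) (hu : u ∈ parabolic cs J) :
    ∀ v v' : W, v ∈ parabolic cs J → v' ∈ parabolic cs J →
      bruhatCov cs (w' * u) (w * v) → bruhatCov cs (w' * u) (w * v') → v = v' := by
  intro v v' hvP hv'P hcov hcov'
  by_contra hne
  have hnew : w' ≠ w := hlt.2
  obtain ⟨ωw, hωw_red, hωw0⟩ := cs.exists_reduced_word' w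
  have hωw : cs.wordProd ωw = w := hωw0.symm
  have hωw_len : ωw.length = cs.length w := by
    have h1 : cs.length (cs.wordProd ωw) = ωw.length := hωw_red
    rw [hωw] at h1; omega
  obtain ⟨k₁, hk₁, he₁, hr₁⟩ := cover_aux cs J hw hw' hnew hu hvP hcov hωw_red hωw
  obtain ⟨k₂, hk₂, he₂, hr₂⟩ := cover_aux cs J hw hw' hnew hu hv'P hcov' hωw_red hωw
  have hkne : k₁ ≠ k₂ := by
    rintro rfl
    rw [he₂] at he₁
    -- he₁ : w' * u * v'⁻¹ = w' * u * v⁻¹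
    apply hne
    have h2 : v⁻¹ = v'⁻¹ := mul_left_cancel (a := w' * u) he₁.symm
    exact inv_injective h2
  have core : ∀ (ka kb : ℕ) (va vb : W), ka < kb → kb < ωw.length →
      cs.wordProd (ωw.eraseIdx ka) = w' * u * va⁻¹ →
      cs.wordProd (ωw.eraseIdx kb) = w' * u * vb⁻¹ →
      cs.IsReduced (ωw.eraseIdx ka) → va ∈ parabolic cs J → vb ∈ parabolic cs J → False := by
    intro ka kb va vb hab hbl hea heb hreda hva hvb
    have hwa : w * (cs.rightInvSeq ωw).getD ka 1 = cs.wordProd (ωw.eraseIdx ka) := by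
      rw [← hωw]; exact cs.wordProd_mul_getD_rightInvSeq ωw ka
    have hwb : w * (cs.rightInvSeq ωw).getD kb 1 = cs.wordProd (ωw.eraseIdx kb) := by
      rw [← hωw]; exact cs.wordProd_mul_getD_rightInvSeq ωw kb
    have hρaa := cs.getD_rightInvSeq_mul_self ωw ka
    have hρainv : ((cs.rightInvSeq ωw).getD ka 1)⁻¹ = (cs.rightInvSeq ωw).getD ka 1 :=
      inv_eq_of_mul_eq_one_right hρaa
    have h1 : (cs.rightInvSeq ωw).getD ka 1 = w⁻¹ * (w' * u * va⁻¹) := by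
      rw [← hea, ← hwa]; group
    have h2 : (cs.rightInvSeq ωw).getD kb 1 = w⁻¹ * (w' * u * vb⁻¹) := by
      rw [← heb, ← hwb]; group
    have h3 : (cs.rightInvSeq ωw).getD ka 1 * (cs.rightInvSeq ωw).getD kb 1 = va * vb⁻¹ := by
      calc (cs.rightInvSeq ωw).getD ka 1 * (cs.rightInvSeq ωw).getD kb 1
          = ((cs.rightInvSeq ωw).getD ka 1)⁻¹ * (cs.rightInvSeq ωw).getD kb 1 := by
            rw [hρainv]
      _ = (w⁻¹ * (w' * u * va⁻¹))⁻¹ * (w⁻¹ * (w' * u * vb⁻¹)) := by rw [h1, h2]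
      _ = va * vb⁻¹ := by group
    have hmemP : (cs.rightInvSeq ωw).getD ka 1 * (cs.rightInvSeq ωw).getD kb 1
        ∈ parabolic cs J := by
      rw [h3]; exact mul_mem hva (inv_mem hvb)
    have h4 := length_eraseIdx_mul_lt cs hωw_red hab hbl hreda
    rw [← hwa] at h4
    have h5 : cs.length (w * (cs.rightInvSeq ωw).getD ka 1) < cs.length w := by
      rw [hwa]
      have h6 := cs.length_wordProd_le (ωw.eraseIdx ka)
      rw [List.length_eraseIdx, if_pos (by omega)] at h6
      omega
    have h7 : cs.length (w * ((cs.rightInvSeq ωw).getD ka 1 * (cs.rightInvSeq ωw).getD kb 1))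
        < cs.length w := by
      rw [← mul_assoc]
      omega
    have h8 := hw _ hmemP
    omega
  rcases lt_or_gt_of_ne hkne with h | h
  · exact core k₁ k₂ v v' h hk₂ he₁ he₂ hr₁ hvP hv'P
  · exact core k₂ k₁ v' v h hk₁ he₂ he₁ hr₂ hv'P hvP

end TNNFlag
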